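/- Let G be the graph whose vertices are V = {x ∈ {−1,1}^{2n} : Σᵢ xᵢ = 0}, with x ~ y iff x and y differ exactly in two consecutive coordinates i, i+1 (with xᵢ ≠ x_{i+1}). Then Ric(G) ≥ −1: for every f:V→ℝ and every vertex x, Γ₂(f)(x) ≥ −Γ(f)(x). -/

import Mathlib

noncomputable section
open Matrix

/-- The graph Laplacian: `Δ f (x) = Σ_{y ~ x} (f y - f x)`. -/
def lap {V : Type*} (G : SimpleGraph V) (f : V → ℝ) (x : V) : ℝ :=
  ∑ᶠ y ∈ {y | G.Adj x y}, (f y - f x)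

/-- The carré du champ `Γ(f,g)(x) = (1/2) Σ_{y ~ x} (f x - f y)(g x - g y)`. -/
def gam {V : Type*} (G : SimpleGraph V) (f g : V → ℝ) (x : V) : ℝ :=
  (1/2) * ∑ᶠ y ∈ {y | G.Adj x y}, (f x - f y) * (g x - g y)

/-- The iterated carré du champ `Γ₂(f) = (1/2) Δ Γ(f) - Γ(f, Δ f)`. -/
def gam2 {V : Type*} (G : SimpleGraph V) (f : V → ℝ) (x : V) : ℝ :=
  (1/2) * lap G (gam G f f) x - gam G f (lap G f) x

/-- `Ric(G) ≥ K` : the Bochner inequality `Γ₂(f)(x) ≥ K Γ(f)(x)` holds for all `f, x`. -/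
def RicGE {V : Type*} (G : SimpleGraph V) (K : ℝ) : Prop :=
  ∀ (f : V → ℝ) (x : V), K * gam G f f x ≤ gam2 G f x

/-- Adjacency by an adjacent transposition: `y` is obtained from `x` by exchanging the
(distinct) values in two consecutive coordinates `i, i+1`. -/
def adjTransp (N : ℕ) (x y : Fin N → ℤ) : Prop :=
  ∃ (i : ℕ) (h : i + 1 < N),
    x ⟨i, by omega⟩ ≠ x ⟨i + 1, h⟩ ∧
    y = x ∘ (Equiv.swap ⟨i, by omega⟩ ⟨i + 1, h⟩)

/-- Vertices of the middle slice: `±1`-sequences of length `2n` summing to `0`. -/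
def MidSlice (n : ℕ) : Type :=
  {x : Fin (2 * n) → ℤ // (∀ i, x i = 1 ∨ x i = -1) ∧ ∑ i, x i = 0}

/-- The middle slice with adjacent transpositions. -/
def midSliceGraph (n : ℕ) : SimpleGraph (MidSlice n) where
  Adj x y := adjTransp (2 * n) x.1 y.1
  symm := by
    constructor
    rintro x y ⟨i, h, hne, heq⟩
    refine ⟨i, h, ?_, ?_⟩
    · rw [heq]
      simpa [Function.comp, Equiv.swap_apply_left, Equiv.swap_apply_right] using hne.symm
    · rw [heq]
      funext j
      simp [Function.comp, Equiv.swap_apply_self]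
  loopless := by
    constructor
    rintro x ⟨i, h, hne, heq⟩
    apply hne
    conv_lhs => rw [heq]
    simp [Function.comp, Equiv.swap_apply_left]

/-!
The neighbours of a vertex `x` of the slice are the `sᵢ x`, where `i` runs over the descents of
`x` (the positions with `xᵢ ≠ xᵢ₊₁`) and `sᵢ` exchanges the coordinates `i, i + 1`. On any locally
finite graph, `Γ₂(f)(x) = ¼ Σ_{y ~ x} Σ_{z ~ y} (f z - 2 f y + f x)²
- ¼ Σ_{y ~ x} (deg x + deg y) (f y - f x)² + ½ (Δf(x))²`.
Among the neighbours of `sᵢ x` are `x` and, for each descent `j` with `|i - j| ≥ 2`, the vertex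
`sⱼ sᵢ x = sᵢ sⱼ x`, a common neighbour of `sᵢ x` and `sⱼ x`. Pairing the terms of `(i, j)` and
`(j, i)` bounds the double sum below by `4 Σ aᵢ² + Σ (aᵢ - aⱼ)²` over the far pairs, where
`aᵢ = f(sᵢ x) - f x`; with `Σ_{i,j} (aᵢ - aⱼ)² = 2 deg x Σ aᵢ² - 2 (Σ aᵢ)²` this leaves only the
at most two descents `j = i ± 1`, each costing at most `aᵢ²`. Half of that cost is recovered from
the degree: as the coordinates are `±1`, each of the positions `i ± 1` is a descent of exactly one
of `x` and `sᵢ x`, so `deg(sᵢ x) + 2 #{j : |i - j| = 1} ≤ deg x + 2`.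
-/

open Finset

section Graph

variable {V : Type*} (G : SimpleGraph V) [G.LocallyFinite] (f g : V → ℝ) (x : V)

theorem lap_eq_sum : lap G f x = ∑ y ∈ G.neighborFinset x, (f y - f x) := by
  rw [lap, ← finsum_mem_coe_finset, SimpleGraph.coe_neighborFinset]; rfl

theorem gam_eq_sum :
    gam G f g x = (1 / 2) * ∑ y ∈ G.neighborFinset x, (f x - f y) * (g x - g y) := by
  rw [gam, ← finsum_mem_coe_finset, SimpleGraph.coe_neighborFinset]; rfl

theorem gam_self_eq_sum : gam G f f x = (1 / 2) * ∑ y ∈ G.neighborFinset x, (f y - f x) ^ 2 := by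
  rw [gam_eq_sum]; congr 1; exact Finset.sum_congr rfl fun y _ => by ring

theorem gam2_eq_sum :
    gam2 G f x
      = (1 / 4) * ∑ y ∈ G.neighborFinset x, ∑ z ∈ G.neighborFinset y, (f z - 2 * f y + f x) ^ 2
      - (1 / 4) * ∑ y ∈ G.neighborFinset x, ((G.degree x + G.degree y : ℕ) : ℝ) * (f y - f x) ^ 2
      + (1 / 2) * lap G f x ^ 2 := by
  have second_difference (y : V) : ∑ z ∈ G.neighborFinset y, (f z - 2 * f y + f x) ^ 2
      = 2 * gam G f f y - 2 * (f y - f x) * lap G f y + G.degree y * (f y - f x) ^ 2 := by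
    rw [gam_self_eq_sum, lap_eq_sum, ← G.card_neighborFinset_eq_degree, ← nsmul_eq_mul,
      ← Finset.sum_const]
    simp only [Finset.mul_sum, ← Finset.sum_sub_distrib, ← Finset.sum_add_distrib]
    exact Finset.sum_congr rfl fun z _ => by ring
  calc gam2 G f x
      = ∑ y ∈ G.neighborFinset x, ((1 / 4) * ∑ z ∈ G.neighborFinset y, (f z - 2 * f y + f x) ^ 2
          - (1 / 4) * (G.degree y * (f y - f x) ^ 2) - (1 / 2) * gam G f f x
          + (1 / 2) * lap G f x * (f y - f x)) := by
        rw [gam2, lap_eq_sum G (gam G f f), gam_eq_sum G f (lap G f), Finset.mul_sum,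
          Finset.mul_sum, ← Finset.sum_sub_distrib]
        exact Finset.sum_congr rfl fun y _ => by rw [second_difference]; ring
    _ = _ := by
        simp only [Finset.sum_add_distrib, Finset.sum_sub_distrib, Finset.sum_const,
          ← Finset.mul_sum, lap_eq_sum G f x, gam_self_eq_sum, G.card_neighborFinset_eq_degree,
          Nat.cast_add, add_mul, nsmul_eq_mul]
        ring

end Graph

namespace Finset

variable {ι : Type*} (s : Finset ι)

theorem sum_sum_filter_comm {M : Type*} [AddCommMonoid M] (r : ι → ι → Prop) [DecidableRel r]
    (hr : ∀ i j, r i j → r j i) (g : ι → ι → M) :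
    ∑ i ∈ s, ∑ j ∈ s with r i j, g i j = ∑ i ∈ s, ∑ j ∈ s with r i j, g j i := by
  simp only [sum_filter]
  rw [sum_comm]
  exact sum_congr rfl fun i _ => sum_congr rfl fun j _ => if_congr ⟨hr j i, hr i j⟩ rfl rfl

theorem sum_sum_sub_sq (a : ι → ℝ) :
    ∑ i ∈ s, ∑ j ∈ s, (a i - a j) ^ 2 = 2 * #s * ∑ i ∈ s, a i ^ 2 - 2 * (∑ i ∈ s, a i) ^ 2 := by
  simp only [sub_sq, sum_add_distrib, sum_sub_distrib, sum_const, nsmul_eq_mul, ← mul_sum,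
    ← sum_mul]
  ring

end Finset

section Core

variable {ι : Type*} (s : Finset ι) {close : ι → ι → Prop} [DecidableRel close] (a : ι → ℝ)

theorem sum_sum_close_sub_sq_le (hclose : ∀ i j, close i j → close j i) :
    ∑ i ∈ s, ∑ j ∈ s with close i j, (a i - a j) ^ 2
      ≤ 4 * ∑ i ∈ s, (#{j ∈ s | close i j} : ℝ) * a i ^ 2 :=
  calc ∑ i ∈ s, ∑ j ∈ s with close i j, (a i - a j) ^ 2
      ≤ ∑ i ∈ s, ∑ j ∈ s with close i j, (2 * a i ^ 2 + 2 * a j ^ 2) :=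
        sum_le_sum fun i _ => sum_le_sum fun j _ => by nlinarith [sq_nonneg (a i + a j)]
    _ = 4 * ∑ i ∈ s, (#{j ∈ s | close i j} : ℝ) * a i ^ 2 := by
        rw [sum_congr rfl fun i _ => sum_add_distrib, sum_add_distrib,
          s.sum_sum_filter_comm close hclose fun i j => 2 * a j ^ 2]
        simp only [sum_const, nsmul_eq_mul, mul_sum, ← sum_add_distrib]
        exact sum_congr rfl fun i _ => by ring

variable [DecidableEq ι]

theorem sum_sum_far_sub_sq_add_sum_sum_close_sub_sq :
    ∑ i ∈ s, ∑ j ∈ s with ¬close i j ∧ j ≠ i, (a i - a j) ^ 2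
      + ∑ i ∈ s, ∑ j ∈ s with close i j, (a i - a j) ^ 2
      = 2 * #s * ∑ i ∈ s, a i ^ 2 - 2 * (∑ i ∈ s, a i) ^ 2 := by
  rw [← s.sum_sum_sub_sq, ← sum_add_distrib]
  refine sum_congr rfl fun i _ => ?_
  rw [← filter_filter, sum_filter_of_ne, add_comm, sum_filter_add_sum_filter_not]
  rintro j - hj rfl
  simp at hj

theorem sum_sum_far_sub_sq_le (hclose : ∀ i j, close i j → close j i) (b : ι → ι → ℝ)
    (hb : ∀ i ∈ s, ∀ j ∈ s, ¬close i j → j ≠ i → b i j - b j i = 2 * (a j - a i)) :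
    ∑ i ∈ s, ∑ j ∈ s with ¬close i j ∧ j ≠ i, (a i - a j) ^ 2
      ≤ ∑ i ∈ s, ∑ j ∈ s with ¬close i j ∧ j ≠ i, b i j ^ 2 := by
  have hfar (i j : ι) (h : ¬close i j ∧ j ≠ i) : ¬close j i ∧ i ≠ j :=
    ⟨fun h' => h.1 (hclose j i h'), h.2.symm⟩
  have pair : ∀ i ∈ s, ∀ j ∈ {j ∈ s | ¬close i j ∧ j ≠ i},
      2 * (a i - a j) ^ 2 ≤ b i j ^ 2 + b j i ^ 2 := by
    intro i hi j hj
    obtain ⟨hj, hc, hne⟩ := mem_filter.1 hj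
    have hsq : 4 * (a i - a j) ^ 2 = (b i j - b j i) ^ 2 := by rw [hb i hi j hj hc hne]; ring
    nlinarith [sq_nonneg (b i j + b j i)]
  have hsum := sum_le_sum fun i hi => sum_le_sum (pair i hi)
  simp only [sum_add_distrib, ← mul_sum] at hsum
  linarith [s.sum_sum_filter_comm _ hfar fun i j => b i j ^ 2]

/- In the application `a i` is the difference of `f` along the `i`-th edge at a vertex, `Q i`
the sum of squared second differences at the `i`-th neighbour, `e i` its degree, and `b i j` the
second difference through the common neighbour of two far neighbours `i` and `j`. -/
theorem neg_half_sum_sq_le_of_close (hclose : ∀ i j, close i j → close j i) (b : ι → ι → ℝ)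
    (Q : ι → ℝ) (e : ι → ℕ)
    (hb : ∀ i ∈ s, ∀ j ∈ s, ¬close i j → j ≠ i → b i j - b j i = 2 * (a j - a i))
    (hQ : ∀ i ∈ s, 4 * a i ^ 2 + ∑ j ∈ s with ¬close i j ∧ j ≠ i, b i j ^ 2 ≤ Q i)
    (hc : ∀ i ∈ s, #{j ∈ s | close i j} ≤ 2)
    (he : ∀ i ∈ s, e i + 2 * #{j ∈ s | close i j} ≤ #s + 2) :
    -((1 / 2) * ∑ i ∈ s, a i ^ 2)
      ≤ (1 / 4) * ∑ i ∈ s, Q i - (1 / 4) * ∑ i ∈ s, ((#s + e i : ℕ) : ℝ) * a i ^ 2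
        + (1 / 2) * (∑ i ∈ s, a i) ^ 2 := by
  have hsplit := sum_sum_far_sub_sq_add_sum_sum_close_sub_sq s a (close := close)
  have hclose_le := sum_sum_close_sub_sq_le s a hclose
  have hfar_le := sum_sum_far_sub_sq_le s a hclose b hb
  have hQ_le := sum_le_sum hQ
  have pointwise : ∀ i ∈ s, -((1 / 2) * a i ^ 2) ≤ a i ^ 2 + (#s / 2) * a i ^ 2
      - (#{j ∈ s | close i j} : ℝ) * a i ^ 2 - (1 / 4) * (((#s + e i : ℕ) : ℝ) * a i ^ 2) := by
    intro i hi
    have hci : (#{j ∈ s | close i j} : ℝ) ≤ 2 := by exact_mod_cast hc i hi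
    have hei : (e i : ℝ) + 2 * #{j ∈ s | close i j} ≤ #s + 2 := by exact_mod_cast he i hi
    push_cast
    nlinarith [sq_nonneg (a i)]
  have hsum := sum_le_sum pointwise
  simp only [sum_add_distrib, sum_sub_distrib, sum_neg_distrib, ← mul_sum] at hsum hQ_le
  linarith

end Core

def Consecutive (i j : ℕ) : Prop := j = i + 1 ∨ i = j + 1

instance : DecidableRel Consecutive := fun _ _ => inferInstanceAs (Decidable (_ ∨ _))

theorem Consecutive.symm {i j : ℕ} (h : Consecutive i j) : Consecutive j i := by
  unfold Consecutive at *; omega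

theorem card_filter_consecutive_le_two (s : Finset ℕ) (i : ℕ) : #{j ∈ s | Consecutive i j} ≤ 2 :=
  calc #{j ∈ s | Consecutive i j} ≤ #{i + 1, i - 1} :=
        card_le_card fun j hj => by
          rw [mem_filter, Consecutive] at hj
          rw [mem_insert, mem_singleton]
          omega
    _ ≤ 2 := card_le_two

namespace MidSlice

variable {n : ℕ} (x : MidSlice n) {i j : ℕ}

instance : DecidableEq (MidSlice n) := fun x y =>
  decidable_of_iff (x.1 = y.1) Subtype.ext_iff.symm

def coord (i : ℕ) : ℤ := if h : i < 2 * n then x.1 ⟨i, h⟩ else 0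

theorem coord_eq_one_or_neg_one (h : i < 2 * n) : x.coord i = 1 ∨ x.coord i = -1 := by
  rw [coord, dif_pos h]; exact x.2.1 _

theorem ext_coord {x y : MidSlice n} (h : ∀ i, x.coord i = y.coord i) : x = y := by
  refine Subtype.ext (funext fun k => ?_)
  simpa [coord, k.2] using h k

def descents : Finset ℕ := {i ∈ range (2 * n - 1) | x.coord i ≠ x.coord (i + 1)}

theorem mem_descents : i ∈ x.descents ↔ i + 1 < 2 * n ∧ x.coord i ≠ x.coord (i + 1) := by
  rw [descents, mem_filter, mem_range]
  constructor <;> rintro ⟨h, hne⟩ <;> exact ⟨by omega, hne⟩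

def swapAt (i : ℕ) : MidSlice n :=
  if h : i + 1 < 2 * n then
    ⟨x.1 ∘ Equiv.swap ⟨i, by omega⟩ ⟨i + 1, h⟩,
      fun _ => x.2.1 _, (Equiv.sum_comp _ x.1).trans x.2.2⟩
  else x

theorem val_swapAt (h : i + 1 < 2 * n) :
    (x.swapAt i).1 = x.1 ∘ Equiv.swap ⟨i, by omega⟩ ⟨i + 1, h⟩ := by
  unfold swapAt; exact congrArg Subtype.val (dif_pos h)

theorem coord_swapAt (h : i + 1 < 2 * n) (j : ℕ) :
    (x.swapAt i).coord j = x.coord (Equiv.swap i (i + 1) j) := by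
  by_cases hj : j < 2 * n
  · have hj' : Equiv.swap i (i + 1) j < 2 * n := by rw [Equiv.swap_apply_def]; split_ifs <;> omega
    rw [coord, coord, dif_pos hj, dif_pos hj', val_swapAt x h, Function.comp_apply]
    refine congrArg _ (Fin.ext ?_)
    simp only [Equiv.swap_apply_def, Fin.ext_iff]
    split_ifs <;> rfl
  · rw [coord, coord, dif_neg hj, Equiv.swap_apply_of_ne_of_ne (by omega) (by omega), dif_neg hj]

theorem swapAt_swapAt (h : i + 1 < 2 * n) : (x.swapAt i).swapAt i = x :=
  ext_coord fun j => by rw [coord_swapAt _ h, coord_swapAt x h, Equiv.swap_apply_self]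

theorem swapAt_comm (hi : i + 1 < 2 * n) (hj : j + 1 < 2 * n) (hij : ¬Consecutive i j) :
    (x.swapAt i).swapAt j = (x.swapAt j).swapAt i := by
  refine ext_coord fun k => ?_
  rw [coord_swapAt _ hj, coord_swapAt x hi, coord_swapAt _ hi, coord_swapAt x hj]
  unfold Consecutive at hij
  congr 1
  simp only [Equiv.swap_apply_def]
  split_ifs <;> omega

theorem mem_descents_swapAt_self (hi : i ∈ x.descents) : i ∈ (x.swapAt i).descents := by
  obtain ⟨h, hne⟩ := (mem_descents x).1 hi
  rw [mem_descents, coord_swapAt x h, coord_swapAt x h, Equiv.swap_apply_left,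
    Equiv.swap_apply_right]
  exact ⟨h, hne.symm⟩

theorem mem_descents_swapAt_iff (hi : i + 1 < 2 * n) (hij : ¬Consecutive i j) (hji : j ≠ i) :
    j ∈ (x.swapAt i).descents ↔ j ∈ x.descents := by
  unfold Consecutive at hij
  rw [mem_descents, mem_descents, coord_swapAt x hi, coord_swapAt x hi,
    Equiv.swap_apply_of_ne_of_ne hji (by omega), Equiv.swap_apply_of_ne_of_ne (by omega) (by omega)]

theorem notMem_descents_of_mem_descents_swapAt (hi : i ∈ x.descents) (hij : Consecutive i j)
    (hj : j ∈ (x.swapAt i).descents) : j ∉ x.descents := by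
  intro hjx
  obtain ⟨h, hne⟩ := (mem_descents x).1 hi
  obtain ⟨-, hjne⟩ := (mem_descents x).1 hjx
  obtain ⟨hj2, hyne⟩ := (mem_descents _).1 hj
  rw [coord_swapAt x h, coord_swapAt x h] at hyne
  rcases hij with rfl | rfl
  · rw [Equiv.swap_apply_right, Equiv.swap_apply_of_ne_of_ne (by omega) (by omega)] at hyne
    have := x.coord_eq_one_or_neg_one (i := i) (by omega)
    have := x.coord_eq_one_or_neg_one (i := i + 1) (by omega)
    have := x.coord_eq_one_or_neg_one (i := i + 1 + 1) (by omega)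
    omega
  · rw [Equiv.swap_apply_left, Equiv.swap_apply_of_ne_of_ne (by omega) (by omega)] at hyne
    have := x.coord_eq_one_or_neg_one (i := j) (by omega)
    have := x.coord_eq_one_or_neg_one (i := j + 1) (by omega)
    have := x.coord_eq_one_or_neg_one (i := j + 1 + 1) (by omega)
    omega

theorem swapAt_injOn : Set.InjOn x.swapAt x.descents := by
  intro i hi j hj hij
  obtain ⟨hi2, hine⟩ := (mem_descents x).1 hi
  obtain ⟨hj2, hjne⟩ := (mem_descents x).1 hj
  by_contra hne
  by_cases hji : i = j + 1
  · have hcoord := congrArg (coord · j) hij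
    simp only [coord_swapAt x hi2, coord_swapAt x hj2, Equiv.swap_apply_left] at hcoord
    rw [Equiv.swap_apply_of_ne_of_ne (by omega) (by omega)] at hcoord
    exact hjne hcoord
  · have hcoord := congrArg (coord · i) hij
    simp only [coord_swapAt x hi2, coord_swapAt x hj2, Equiv.swap_apply_left] at hcoord
    rw [Equiv.swap_apply_of_ne_of_ne hne hji] at hcoord
    exact hine hcoord.symm

theorem card_descents_swapAt_add_le (hi : i ∈ x.descents) :
    #(x.swapAt i).descents + 2 * #{j ∈ x.descents | Consecutive i j} ≤ #x.descents + 2 := by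
  have h := ((mem_descents x).1 hi).1
  have far_eq : {j ∈ (x.swapAt i).descents | ¬Consecutive i j}
      = {j ∈ x.descents | ¬Consecutive i j} := by
    ext j
    simp only [mem_filter, and_congr_left_iff]
    intro hij
    rcases eq_or_ne j i with rfl | hji
    · exact iff_of_true (x.mem_descents_swapAt_self hi) hi
    · exact x.mem_descents_swapAt_iff h hij hji
  have close_disjoint : Disjoint {j ∈ (x.swapAt i).descents | Consecutive i j}
      {j ∈ x.descents | Consecutive i j} := by
    rw [disjoint_left]
    intro j hy hx
    rw [mem_filter] at hy hx
    exact x.notMem_descents_of_mem_descents_swapAt hi hy.2 hy.1 hx.1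
  have close_card : #{j ∈ (x.swapAt i).descents | Consecutive i j}
      + #{j ∈ x.descents | Consecutive i j} ≤ 2 := by
    rw [← card_union_of_disjoint close_disjoint, ← filter_union]
    exact card_filter_consecutive_le_two _ i
  have hy := card_filter_add_card_filter_not (s := (x.swapAt i).descents)
    (fun j => Consecutive i j)
  have hx := card_filter_add_card_filter_not (s := x.descents) (fun j => Consecutive i j)
  rw [far_eq] at hy
  omega

theorem adj_iff {x y : MidSlice n} :
    (midSliceGraph n).Adj x y ↔ ∃ i ∈ x.descents, x.swapAt i = y := by
  constructor
  · rintro ⟨i, h, hne, hy⟩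
    refine ⟨i, (mem_descents x).2 ⟨h, ?_⟩, Subtype.ext ((val_swapAt x h).trans hy.symm)⟩
    rwa [coord, coord, dif_pos (by omega), dif_pos h]
  · rintro ⟨i, hi, rfl⟩
    obtain ⟨h, hne⟩ := (mem_descents x).1 hi
    refine ⟨i, h, ?_, val_swapAt x h⟩
    rwa [coord, coord, dif_pos (by omega), dif_pos h] at hne

instance : (midSliceGraph n).LocallyFinite := fun x =>
  Fintype.ofFinset (x.descents.image x.swapAt) fun y => by
    rw [mem_image, SimpleGraph.mem_neighborSet, adj_iff]

theorem neighborFinset_eq : (midSliceGraph n).neighborFinset x = x.descents.image x.swapAt := by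
  ext y
  rw [SimpleGraph.mem_neighborFinset, adj_iff, mem_image]

theorem degree_eq_card_descents : (midSliceGraph n).degree x = #x.descents := by
  rw [← SimpleGraph.card_neighborFinset_eq_degree, neighborFinset_eq,
    card_image_of_injOn x.swapAt_injOn]

theorem sum_neighborFinset (g : MidSlice n → ℝ) :
    ∑ y ∈ (midSliceGraph n).neighborFinset x, g y = ∑ i ∈ x.descents, g (x.swapAt i) := by
  rw [neighborFinset_eq, sum_image x.swapAt_injOn]

theorem insert_far_subset_descents_swapAt (hi : i ∈ x.descents) :
    insert i {j ∈ x.descents | ¬Consecutive i j ∧ j ≠ i} ⊆ (x.swapAt i).descents := by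
  intro j hj
  rcases mem_insert.1 hj with rfl | hj
  · exact x.mem_descents_swapAt_self hi
  · obtain ⟨hjx, hij, hji⟩ := mem_filter.1 hj
    exact (x.mem_descents_swapAt_iff ((mem_descents x).1 hi).1 hij hji).2 hjx

theorem sq_add_sum_far_le_sum_descents_swapAt (f : MidSlice n → ℝ) (hi : i ∈ x.descents) :
    4 * (f (x.swapAt i) - f x) ^ 2
        + ∑ j ∈ x.descents with ¬Consecutive i j ∧ j ≠ i,
          (f ((x.swapAt i).swapAt j) - 2 * f (x.swapAt i) + f x) ^ 2
      ≤ ∑ j ∈ (x.swapAt i).descents, (f ((x.swapAt i).swapAt j) - 2 * f (x.swapAt i) + f x) ^ 2 :=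
  calc 4 * (f (x.swapAt i) - f x) ^ 2
          + ∑ j ∈ x.descents with ¬Consecutive i j ∧ j ≠ i,
            (f ((x.swapAt i).swapAt j) - 2 * f (x.swapAt i) + f x) ^ 2
      = ∑ j ∈ insert i {j ∈ x.descents | ¬Consecutive i j ∧ j ≠ i},
          (f ((x.swapAt i).swapAt j) - 2 * f (x.swapAt i) + f x) ^ 2 := by
        rw [sum_insert (by simp), x.swapAt_swapAt ((mem_descents x).1 hi).1]
        ring
    _ ≤ _ := sum_le_sum_of_subset_of_nonneg (x.insert_far_subset_descents_swapAt hi)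
        fun _ _ _ => sq_nonneg _

end MidSlice

/-- the middle slice of `{±1}^{2n}` with adjacent transpositions has
`Ric ≥ -1`: `Γ₂(f)(x) ≥ -Γ(f)(x)` for all `f, x`. -/
theorem ric_mid_slice (n : ℕ) :
    ∀ (f : MidSlice n → ℝ) (x : MidSlice n),
      -(gam (midSliceGraph n) f f x) ≤ gam2 (midSliceGraph n) f x := by
  intro f x
  rw [gam_self_eq_sum, gam2_eq_sum, lap_eq_sum]
  simp only [MidSlice.sum_neighborFinset, MidSlice.degree_eq_card_descents]
  refine neg_half_sum_sq_le_of_close x.descents (fun i => f (x.swapAt i) - f x)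
    (fun _ _ => Consecutive.symm) (fun i j => f ((x.swapAt i).swapAt j) - 2 * f (x.swapAt i) + f x)
    _ (fun i => #(x.swapAt i).descents) ?_
    (fun i hi => x.sq_add_sum_far_le_sum_descents_swapAt f hi)
    (fun i _ => card_filter_consecutive_le_two _ i) (fun i hi => x.card_descents_swapAt_add_le hi)
  intro i hi j hj hij _
  rw [x.swapAt_comm (x.mem_descents.1 hi).1 (x.mem_descents.1 hj).1 hij]
  ring
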